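/- Let (a_n) be an arithmetic sequence whose ratio sequence (q_n) is unbounded, and let (e_n) be the strictly increasing enumeration of the set {r·a_{k−1} : k ≥ 1, r ∈ {1} ∪ [⌊q_k/3⌋ + 1, q_k − 1]}. Then (e_n) is an arithmetic-type sequence associated with (a_n), its ratio sequence (e_{n+1}/e_n) is unbounded, every element x ∈ t_{(e_n)}(𝕋) has finite supp(x), and t_{(e_n)}(𝕋) is countable. -/

import Mathlib

open Filter Topology

noncomputable section

/-- The circle group `𝕋 = ℝ/ℤ`. -/
abbrev Circle1 : Type := AddCircle (1 : ℝ)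

/-- An arithmetic sequence `(a_n)_{n ≥ 1}`, with the convention `a 0 = 1`:
a strictly increasing sequence of positive integers with `1 < a 1` and `a n ∣ a (n+1)`. -/
def IsArithSeq (a : ℕ → ℕ) : Prop :=
  a 0 = 1 ∧ StrictMono a ∧ ∀ n, a n ∣ a (n + 1)

/-- The ratio sequence: `q n = a n / a (n-1)` (so `q 1 = a 1`). -/
def ratioSeq (a : ℕ → ℕ) (n : ℕ) : ℕ := a n / a (n - 1)

/-- The subgroup of `𝕋` characterized by a sequence of integers `(u n)`. -/
def charSub (u : ℕ → ℕ) : Set Circle1 :=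
  {x : Circle1 | Tendsto (fun n => (u n) • x) atTop (nhds 0)}

/-- The set `{r·a_{k-1} : k ≥ 1, 1 ≤ r ≤ q_k - 1}` whose increasing enumeration is `(d_n)`. -/
def DSet (a : ℕ → ℕ) : Set ℕ :=
  {m | ∃ k, 1 ≤ k ∧ ∃ r, 1 ≤ r ∧ r ≤ ratioSeq a k - 1 ∧ m = r * a (k - 1)}

/-- `(d_n)` is the strictly increasing enumeration of `DSet a`. -/
def IsDSeq (a d : ℕ → ℕ) : Prop := StrictMono d ∧ Set.range d = DSet a

/-- An arithmetic-type sequence associated with the arithmetic sequence `(a_n)`: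
a strictly increasing sequence of positive integers whose set of values contains all the
values `a k` (for `k ≥ 1`) and is contained in `DSet a`. -/
def IsArithTypeSeq (a e : ℕ → ℕ) : Prop :=
  StrictMono e ∧ (∀ k, 1 ≤ k → a k ∈ Set.range e) ∧ Set.range e ⊆ DSet a

/-- `(c_n)_{n ≥ 1}` is the canonical representation of `x ∈ 𝕋` w.r.t. the arithmetic
sequence `(a_n)`: `0 ≤ c n ≤ q n - 1` for all `n ≥ 1`, `c n < q n - 1` infinitely often,
and `x = Σ_{n ≥ 1} c n / a n` in `𝕋`. -/
def IsCanonicalRep (a c : ℕ → ℕ) (x : Circle1) : Prop :=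
  (∀ n, 1 ≤ n → c n ≤ ratioSeq a n - 1) ∧
  {n | 1 ≤ n ∧ c n < ratioSeq a n - 1}.Infinite ∧
  x = ((∑' n : ℕ, (c (n + 1) : ℝ) / (a (n + 1) : ℝ) : ℝ) : Circle1)

/-- The support of a digit sequence: `supp(x) = {n ≥ 1 : c n ≠ 0}`. -/
def suppOf (c : ℕ → ℕ) : Set ℕ := {n | 1 ≤ n ∧ c n ≠ 0}

/-- The set `{r·a_{k-1} : k ≥ 1, r ∈ {1} ∪ [⌊q_k/3⌋ + 1, q_k - 1]}`. -/
def ESet (a : ℕ → ℕ) : Set ℕ :=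
  {m | ∃ k, 1 ≤ k ∧ ∃ r, (r = 1 ∨ (ratioSeq a k / 3 + 1 ≤ r ∧ r ≤ ratioSeq a k - 1)) ∧
    m = r * a (k - 1)}

/-!
Along `(e_n)`, eventually `‖a_k x‖ < 1/12` and `‖r a_k x‖ < 1/12` for every `r` in the upper two
thirds of `[1, q_{k+1})`. A point `u = a_k x` this close to `0` whose multiples along that long run
of consecutive `r` all stay close to `0` cannot wind around the circle, so
`‖q_{k+1} u‖ = q_{k+1} ‖u‖`. Thus `‖a_k x‖` grows like `a_k` while staying below `1/12`, which
forces `a_K x = 0` for some `K`. There are finitely many `a_K`-torsion points, and for such `x` the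
tail `a_K ∑_{n>K} c_n / a_n` of the canonical representation is an integer in `[0, 1)`, hence
zero, so `supp x ⊆ [1, K]`.
-/

variable {a : ℕ → ℕ}

namespace IsArithSeq

theorem pos (ha : IsArithSeq a) (n : ℕ) : 0 < a n :=
  lt_of_lt_of_le (by rw [ha.1]; exact one_pos) (ha.2.1.monotone n.zero_le)

theorem ratioSeq_succ_mul (ha : IsArithSeq a) (n : ℕ) : ratioSeq a (n + 1) * a n = a (n + 1) :=
  Nat.div_mul_cancel (ha.2.2 n)

theorem cast_ratioSeq_succ_mul (ha : IsArithSeq a) (n : ℕ) :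
    (ratioSeq a (n + 1) : ℝ) * a n = a (n + 1) := by
  exact_mod_cast ha.ratioSeq_succ_mul n

theorem two_le_ratioSeq (ha : IsArithSeq a) (n : ℕ) : 2 ≤ ratioSeq a (n + 1) := by
  have h : 1 * a n < ratioSeq a (n + 1) * a n := by
    rw [one_mul, ha.ratioSeq_succ_mul]; exact ha.2.1 n.lt_succ_self
  exact Nat.lt_of_mul_lt_mul_right h

theorem dvd_of_le (ha : IsArithSeq a) {m n : ℕ} (h : m ≤ n) : a m ∣ a n :=
  Nat.rel_of_forall_rel_succ_of_le (· ∣ ·) ha.2.2 h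

theorem mul_lt_of_lt_ratioSeq (ha : IsArithSeq a) {i r : ℕ} (hr : r < ratioSeq a (i + 1)) :
    r * a i < a (i + 1) := by
  rw [← ha.ratioSeq_succ_mul i]; exact Nat.mul_lt_mul_of_pos_right hr (ha.pos i)

end IsArithSeq

theorem mem_ESet_iff {m : ℕ} : m ∈ ESet a ↔ ∃ i r,
    (r = 1 ∨ (ratioSeq a (i + 1) / 3 + 1 ≤ r ∧ r ≤ ratioSeq a (i + 1) - 1)) ∧ m = r * a i := by
  constructor
  · rintro ⟨k, hk, r, hr, rfl⟩
    obtain ⟨i, rfl⟩ : ∃ i, k = i + 1 := ⟨k - 1, by omega⟩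
    exact ⟨i, r, hr, rfl⟩
  · rintro ⟨i, r, hr, rfl⟩
    exact ⟨i + 1, by omega, r, hr, rfl⟩

theorem apply_mem_ESet (i : ℕ) : a i ∈ ESet a :=
  mem_ESet_iff.2 ⟨i, 1, .inl rfl, (one_mul _).symm⟩

theorem mul_apply_mem_ESet {i r : ℕ} (h₁ : ratioSeq a (i + 1) / 3 + 1 ≤ r)
    (h₂ : r ≤ ratioSeq a (i + 1) - 1) : r * a i ∈ ESet a :=
  mem_ESet_iff.2 ⟨i, r, .inr ⟨h₁, h₂⟩, rfl⟩

theorem ESet_subset_DSet (ha : IsArithSeq a) : ESet a ⊆ DSet a := by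
  rintro m ⟨k, hk, r, hr, rfl⟩
  obtain ⟨i, rfl⟩ : ∃ i, k = i + 1 := ⟨k - 1, by omega⟩
  have := ha.two_le_ratioSeq i
  exact ⟨i + 1, hk, r, by omega, by omega, rfl⟩

theorem le_of_mem_ESet_of_lt (ha : IsArithSeq a) {k m : ℕ} (hm : m ∈ ESet a) (hlt : a k < m) :
    (ratioSeq a (k + 1) / 3 + 1) * a k ≤ m := by
  obtain ⟨i, r, hr, rfl⟩ := mem_ESet_iff.1 hm
  have hq := ha.two_le_ratioSeq i
  have hr₁ : 1 ≤ r := by omega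
  have hri : r * a i < a (i + 1) := ha.mul_lt_of_lt_ratioSeq (by omega)
  have hki : k ≤ i := by
    by_contra! hik
    exact (hlt.trans hri).not_ge (ha.2.1.monotone hik)
  rcases hki.eq_or_lt with rfl | hki
  · rcases hr with rfl | ⟨hr, -⟩
    · exact absurd hlt (by simp)
    · exact Nat.mul_le_mul_right _ hr
  · calc (ratioSeq a (k + 1) / 3 + 1) * a k ≤ ratioSeq a (k + 1) * a k := by
          have := ha.two_le_ratioSeq k
          exact Nat.mul_le_mul_right _ (by omega)
      _ = a (k + 1) := ha.ratioSeq_succ_mul k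
      _ ≤ a i := ha.2.1.monotone hki
      _ ≤ r * a i := Nat.le_mul_of_pos_left _ hr₁

theorem exists_mul_lt_succ_of_range_eq_ESet (ha : IsArithSeq a)
    (hq : ∀ C : ℕ, ∃ n, 1 ≤ n ∧ C < ratioSeq a n) {e : ℕ → ℕ} (he : StrictMono e)
    (hrange : Set.range e = ESet a) (C : ℕ) : ∃ n, C * e n < e (n + 1) := by
  obtain ⟨k, hk, hCk⟩ := hq (3 * C + 2)
  obtain ⟨i, rfl⟩ : ∃ i, k = i + 1 := ⟨k - 1, by omega⟩
  obtain ⟨n, hn⟩ : a i ∈ Set.range e := hrange ▸ apply_mem_ESet i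
  refine ⟨n, ?_⟩
  have hgap := le_of_mem_ESet_of_lt ha (hrange ▸ Set.mem_range_self (n + 1))
    (hn ▸ he n.lt_succ_self)
  calc C * e n < (ratioSeq a (i + 1) / 3 + 1) * a i := by
        rw [hn]; exact Nat.mul_lt_mul_of_pos_right (by omega) (ha.pos i)
    _ ≤ e (n + 1) := hgap

theorem round_mul_eq_of_forall_abs_sub_round_lt {β : ℝ} (hβ : |β| < 1 / 3) {r₀ r₁ : ℕ}
    (hr : r₀ ≤ r₁) (h : ∀ r : ℕ, r₀ ≤ r → r ≤ r₁ → |r * β - round (r * β)| < 1 / 3) :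
    round (r₁ * β) = round (r₀ * β) := by
  induction r₁, hr using Nat.le_induction with
  | base => rfl
  | succ r hr ih =>
    rw [← ih fun s hs₀ hs₁ => h s hs₀ (by omega)]
    have h₁ := h (r + 1) (by omega) le_rfl
    have h₀ := h r hr (by omega)
    have hstep : |((round (((r + 1 : ℕ) : ℝ) * β) - round (r * β) : ℤ) : ℝ)| < 1 := by
      push_cast at h₁ ⊢
      rw [abs_lt] at h₀ h₁ hβ ⊢
      constructor <;> linarith
    exact sub_eq_zero.1 (Int.abs_lt_one_iff.1 (by exact_mod_cast hstep))

theorem natCast_mul_abs_lt_half {q : ℕ} {β : ℝ} (hβ : |β| < 1 / 12)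
    (h : ∀ r : ℕ, q / 3 + 1 ≤ r → r ≤ q - 1 → |r * β - round (r * β)| < 1 / 12) :
    q * |β| < 1 / 2 := by
  rcases lt_or_ge q 2 with hq | hq
  · have : (q : ℝ) ≤ 1 := by exact_mod_cast (by omega : q ≤ 1)
    nlinarith [abs_nonneg β]
  set r₀ := q / 3 + 1
  set r₁ := q - 1
  have hround := round_mul_eq_of_forall_abs_sub_round_lt (r₀ := r₀) (r₁ := r₁) (by linarith)
    (by omega) fun r h₀ h₁ => (h r h₀ h₁).trans (by norm_num)
  have hspan : ((r₁ : ℝ) - r₀) * |β| < 1 / 6 := by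
    have e₁ := h r₁ (by omega) le_rfl
    have e₀ := h r₀ le_rfl (by omega)
    rw [hround] at e₁
    rw [← abs_of_nonneg (by simp; omega : (0 : ℝ) ≤ r₁ - r₀), ← abs_mul, abs_lt]
    rw [abs_lt] at e₀ e₁
    constructor <;> linarith
  have hr₁ : (r₁ : ℝ) = q - 1 := by rw [Nat.cast_sub (by omega)]; simp
  have hr₀ : 3 * (r₀ : ℝ) ≤ q + 3 := by
    have : 3 * r₀ ≤ q + 3 := by omega
    exact_mod_cast this
  nlinarith [abs_nonneg β]

theorem exists_coe_eq_and_norm_eq_abs (u : Circle1) : ∃ t : ℝ, (t : Circle1) = u ∧ ‖u‖ = |t| := by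
  obtain ⟨s, rfl⟩ := QuotientAddGroup.mk_surjective u
  refine ⟨s - round s, ?_, UnitAddCircle.norm_eq⟩
  rw [AddCircle.coe_sub, sub_eq_self, AddCircle.coe_eq_zero_iff]
  exact ⟨round s, by simp⟩

theorem norm_nsmul_eq_mul_norm_of_norm_nsmul_lt {u : Circle1} {q : ℕ} (hu : ‖u‖ < 1 / 12)
    (h : ∀ r : ℕ, q / 3 + 1 ≤ r → r ≤ q - 1 → ‖r • u‖ < 1 / 12) : ‖q • u‖ = q * ‖u‖ := by
  obtain ⟨t, rfl, hnorm⟩ := exists_coe_eq_and_norm_eq_abs u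
  have hcoe (r : ℕ) : r • (t : Circle1) = ((r * t : ℝ) : Circle1) := by
    rw [← AddCircle.coe_nsmul, nsmul_eq_mul]
  have hsmall : q * |t| < 1 / 2 := natCast_mul_abs_lt_half (hnorm ▸ hu) fun r h₀ h₁ => by
    simpa only [hcoe, UnitAddCircle.norm_eq] using h r h₀ h₁
  have habs : |(q : ℝ) * t| = q * |t| := by rw [abs_mul, Nat.abs_cast]
  rw [hnorm, hcoe, (AddCircle.norm_coe_eq_abs_iff _ one_ne_zero).2 (by norm_num; linarith), habs]

theorem exists_forall_norm_nsmul_lt_of_mem_charSub {u : ℕ → ℕ} (hu : StrictMono u) {x : Circle1}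
    (hx : x ∈ charSub u) {ε : ℝ} (hε : 0 < ε) :
    ∃ M, ∀ m ∈ Set.range u, M ≤ m → ‖m • x‖ < ε := by
  obtain ⟨N, hN⟩ := eventually_atTop.1 ((NormedAddGroup.tendsto_nhds_zero.1 hx) ε hε)
  exact ⟨u N, by rintro _ ⟨n, rfl⟩ hn; exact hN n (hu.le_iff_le.1 hn)⟩

theorem IsArithSeq.norm_nsmul_succ_eq (ha : IsArithSeq a) {x : Circle1} {M : ℕ}
    (hM : ∀ m ∈ ESet a, M ≤ m → ‖m • x‖ < 1 / 12) {j : ℕ} (hj : M ≤ j) :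
    ‖a (j + 1) • x‖ = ratioSeq a (j + 1) * ‖a j • x‖ := by
  have hsmall : ∀ r, 1 ≤ r → r * a j ∈ ESet a → ‖(r * a j) • x‖ < 1 / 12 := fun r hr hmem =>
    hM _ hmem (hj.trans (ha.2.1.id_le j |>.trans (Nat.le_mul_of_pos_left _ hr)))
  rw [← ha.ratioSeq_succ_mul j, mul_comm, mul_nsmul]
  refine norm_nsmul_eq_mul_norm_of_norm_nsmul_lt ?_ fun r h₀ h₁ => ?_
  · simpa using hsmall 1 le_rfl (by simpa using apply_mem_ESet j)
  · rw [← mul_nsmul, mul_comm]; exact hsmall r (by omega) (mul_apply_mem_ESet h₀ h₁)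

theorem IsArithSeq.exists_nsmul_eq_zero (ha : IsArithSeq a) {x : Circle1} {M : ℕ}
    (hM : ∀ m ∈ ESet a, M ≤ m → ‖m • x‖ < 1 / 12) : ∃ K, a K • x = 0 := by
  have hlin : ∀ j, M ≤ j → (a j : ℝ) * ‖a M • x‖ = a M * ‖a j • x‖ := by
    intro j hj
    induction j, hj using Nat.le_induction with
    | base => rfl
    | succ j hj ih =>
      rw [ha.norm_nsmul_succ_eq hM hj, ← ha.cast_ratioSeq_succ_mul j, mul_assoc, ih]; ring
  refine ⟨M, norm_eq_zero.1 (le_antisymm ?_ (norm_nonneg _))⟩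
  by_contra! hpos
  -- `a j * ‖a M • x‖` tends to infinity, yet equals `a M * ‖a j • x‖ < a M / 12`
  have hgrow : Tendsto (fun j => (a j : ℝ) * ‖a M • x‖) atTop atTop :=
    (tendsto_natCast_atTop_atTop.comp ha.2.1.tendsto_atTop).atTop_mul_const hpos
  obtain ⟨j, hj, hjM⟩ := ((hgrow.eventually_ge_atTop (a M / 12)).and (eventually_ge_atTop M)).exists
  have hjx := hM _ (apply_mem_ESet j) (hjM.trans (ha.2.1.id_le j))
  have : (0 : ℝ) < a M := by exact_mod_cast ha.pos M
  rw [hlin j hjM] at hj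
  nlinarith

section Digits

variable {c : ℕ → ℕ}

theorem IsArithSeq.inv_sub_inv_succ (ha : IsArithSeq a) (n : ℕ) :
    1 / (a n : ℝ) - 1 / a (n + 1) = ((ratioSeq a (n + 1) : ℝ) - 1) / a (n + 1) := by
  have := ha.pos n
  have := ha.two_le_ratioSeq n
  rw [← ha.cast_ratioSeq_succ_mul]
  field_simp

theorem IsArithSeq.digit_div_le (ha : IsArithSeq a) {n : ℕ}
    (hc : c (n + 1) ≤ ratioSeq a (n + 1) - 1) :
    (c (n + 1) : ℝ) / a (n + 1) ≤ 1 / a n - 1 / a (n + 1) := by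
  rw [ha.inv_sub_inv_succ]
  have := ha.two_le_ratioSeq n
  gcongr
  have : (c (n + 1) : ℝ) + 1 ≤ ratioSeq a (n + 1) := by exact_mod_cast (by omega)
  linarith

theorem IsArithSeq.digit_div_lt (ha : IsArithSeq a) {n : ℕ}
    (hc : c (n + 1) < ratioSeq a (n + 1) - 1) :
    (c (n + 1) : ℝ) / a (n + 1) < 1 / a n - 1 / a (n + 1) := by
  rw [ha.inv_sub_inv_succ]
  have := ha.pos (n + 1)
  gcongr
  have : (c (n + 1) : ℝ) + 1 < ratioSeq a (n + 1) := by exact_mod_cast (by omega)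
  linarith

theorem IsArithSeq.hasSum_inv_sub_inv (ha : IsArithSeq a) (K : ℕ) :
    HasSum (fun i => 1 / (a (i + K) : ℝ) - 1 / a (i + K + 1)) (1 / a K) := by
  have hnonneg : ∀ i, (0 : ℝ) ≤ 1 / a (i + K) - 1 / a (i + K + 1) := fun i => by
    have := ha.pos (i + K)
    have := ha.2.1.monotone (i + K).le_succ
    rw [sub_nonneg]; gcongr
  have hpartial : ∀ n, ∑ i ∈ Finset.range n, (1 / (a (i + K) : ℝ) - 1 / a (i + K + 1)) =
      1 / a K - 1 / a (n + K) := fun n => by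
    simpa [add_right_comm] using Finset.sum_range_sub' (fun i => 1 / (a (i + K) : ℝ)) n
  have hlim : Tendsto (fun n => 1 / (a (n + K) : ℝ)) atTop (𝓝 0) := by
    simp only [one_div]
    exact tendsto_inv_atTop_zero.comp <| tendsto_natCast_atTop_atTop.comp <|
      (ha.2.1.comp (strictMono_id.add_const K)).tendsto_atTop
  rw [hasSum_iff_tendsto_nat_of_nonneg hnonneg]
  simp only [hpartial]
  simpa using (tendsto_const_nhds (x := 1 / (a K : ℝ))).sub hlim

theorem IsArithSeq.summable_digit_div (ha : IsArithSeq a)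
    (hc : ∀ n, 1 ≤ n → c n ≤ ratioSeq a n - 1) :
    Summable fun n => (c (n + 1) : ℝ) / a (n + 1) :=
  Summable.of_nonneg_of_le (fun _ => by positivity) (fun n => ha.digit_div_le (hc _ n.succ_pos))
    (ha.hasSum_inv_sub_inv 0).summable

theorem IsArithSeq.tsum_digit_div_lt (ha : IsArithSeq a)
    (hc : ∀ n, 1 ≤ n → c n ≤ ratioSeq a n - 1)
    (hinf : {n | 1 ≤ n ∧ c n < ratioSeq a n - 1}.Infinite) (K : ℕ) :
    ∑' i, (c (i + K + 1) : ℝ) / a (i + K + 1) < 1 / a K := by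
  obtain ⟨m, ⟨-, hm⟩, hKm⟩ := hinf.exists_gt K
  obtain ⟨i, rfl⟩ : ∃ i, m = i + K + 1 := ⟨m - K - 1, by omega⟩
  exact hasSum_lt (f := fun j => (c (j + K + 1) : ℝ) / a (j + K + 1)) (i := i)
    (fun j => ha.digit_div_le (hc _ (by omega))) (ha.digit_div_lt hm)
    ((summable_nat_add_iff K).2 (ha.summable_digit_div hc)).hasSum (ha.hasSum_inv_sub_inv K)

theorem IsCanonicalRep.suppOf_subset_Iic (ha : IsArithSeq a) {x : Circle1}
    (hc : IsCanonicalRep a c x) {K : ℕ} (hK : a K • x = 0) : suppOf c ⊆ Set.Iic K := by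
  obtain ⟨hdig, hinf, rfl⟩ := hc
  have hpos : (0 : ℝ) < a K := by exact_mod_cast ha.pos K
  set T := ∑' i, (c (i + K + 1) : ℝ) / a (i + K + 1) with hTdef
  have hT : HasSum (fun i => (c (i + K + 1) : ℝ) / a (i + K + 1)) T :=
    ((summable_nat_add_iff K).2 (ha.summable_digit_div hdig)).hasSum
  -- the first `K` digits contribute a multiple of `1 / a K`, so `a K • x` is the image of `a K * T`
  have hhead : (a K : ℝ) * ∑ i ∈ Finset.range K, (c (i + 1) : ℝ) / a (i + 1) =
      ((∑ i ∈ Finset.range K, c (i + 1) * (a K / a (i + 1)) : ℕ) : ℝ) := by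
    push_cast [Finset.mul_sum]
    refine Finset.sum_congr rfl fun i hi => ?_
    rw [Nat.cast_div_charZero (ha.dvd_of_le (Finset.mem_range.1 hi))]
    have := ha.pos (i + 1)
    field_simp
  have hnat (n : ℕ) : ((n : ℝ) : Circle1) = 0 := (AddCircle.coe_eq_zero_iff _).2 ⟨n, by simp⟩
  rw [← (ha.summable_digit_div hdig).sum_add_tsum_nat_add K, ← AddCircle.coe_nsmul, nsmul_eq_mul,
    mul_add, AddCircle.coe_add, hhead, hnat, zero_add] at hK
  obtain ⟨z, hz⟩ := (AddCircle.coe_eq_zero_iff _).1 hK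
  rw [zsmul_eq_mul, mul_one] at hz
  have hT_nonneg : 0 ≤ T := hT.nonneg fun _ => by positivity
  have hT_lt : a K * T < 1 := by
    have := ha.tsum_digit_div_lt hdig hinf K
    rwa [← hTdef, lt_div_iff₀ hpos, mul_comm] at this
  have hz₀ : z = 0 := by
    have h₀ : (0 : ℝ) ≤ z := hz ▸ by positivity
    have h₁ : (z : ℝ) < 1 := hz ▸ hT_lt
    have : 0 ≤ z ∧ z < 1 := ⟨by exact_mod_cast h₀, by exact_mod_cast h₁⟩
    omega
  have hT_eq : T = 0 := by
    rw [hz₀, Int.cast_zero] at hz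
    exact (mul_eq_zero.1 hz.symm).resolve_left hpos.ne'
  have hzero := (hasSum_zero_iff_of_nonneg fun _ => by positivity).1 (hT_eq ▸ hT)
  rintro n ⟨hn, hcn⟩
  by_contra hnK
  obtain ⟨i, rfl⟩ : ∃ i, n = i + K + 1 := ⟨n - K - 1, by simp at hnK; omega⟩
  have := congrFun hzero i
  simp only [Pi.zero_apply, div_eq_zero_iff, Nat.cast_eq_zero] at this
  exact this.elim hcn (ha.pos _).ne'

end Digits

theorem IsArithSeq.exists_nsmul_eq_zero_of_mem_charSub (ha : IsArithSeq a) {e : ℕ → ℕ}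
    (he : StrictMono e) (hrange : Set.range e = ESet a) {x : Circle1} (hx : x ∈ charSub e) :
    ∃ K, a K • x = 0 := by
  obtain ⟨M, hM⟩ := exists_forall_norm_nsmul_lt_of_mem_charSub he hx (by norm_num : (0 : ℝ) < 1 / 12)
  exact ha.exists_nsmul_eq_zero (hrange ▸ hM)

/-- the increasing enumeration `(e_n)` of `ESet a` is an arithmetic-type
sequence with unbounded ratio, every element of `t_{(e_n)}(𝕋)` has finite support, and
`t_{(e_n)}(𝕋)` is countable. -/
theorem eseq_unbounded_ratio_countable (a e : ℕ → ℕ) (ha : IsArithSeq a)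
    (hq : ∀ C : ℕ, ∃ n, 1 ≤ n ∧ C < ratioSeq a n)
    (he : StrictMono e) (hrange : Set.range e = ESet a) :
    IsArithTypeSeq a e ∧
      (∀ C : ℕ, ∃ n, C * e n < e (n + 1)) ∧
      (∀ x ∈ charSub e, ∀ c : ℕ → ℕ, IsCanonicalRep a c x → (suppOf c).Finite) ∧
      (charSub e).Countable := by
  have htorsion : ∀ x ∈ charSub e, ∃ K, a K • x = 0 := fun x hx =>
    ha.exists_nsmul_eq_zero_of_mem_charSub he hrange hx
  refine ⟨⟨he, fun k _ => hrange ▸ apply_mem_ESet k, hrange ▸ ESet_subset_DSet ha⟩,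
    exists_mul_lt_succ_of_range_eq_ESet ha hq he hrange, fun x hx c hc => ?_, ?_⟩
  · obtain ⟨K, hK⟩ := htorsion x hx
    exact (Set.finite_Iic K).subset (hc.suppOf_subset_Iic ha hK)
  · refine (Set.countable_iUnion fun K => (AddCircle.finite_torsion _ (ha.pos K)).countable).mono
      fun x hx => ?_
    obtain ⟨K, hK⟩ := htorsion x hx
    exact Set.mem_iUnion.2 ⟨K, hK⟩
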